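/- arXiv:1310.1777 — 2 statements merged into one kernel-verified Lean document; each statement's English description precedes it below -/
import Mathlib

section
/- If the item costs c(a) are independent random variables with c(a) uniform on (0, d_a) for constants d_a > 0, then the expected total VCG cost is at least twice the expected minimum (nominal) cost: E[C_VCG] ≥ 2 E[C*]. -/
open MeasureTheory ProbabilityTheory ENNReal
open scoped BigOperators

variable {A : Type*} [Fintype A] [DecidableEq A]

/-- The nominal cost of a structure `S`: the sum of the item costs. -/
noncomputable def structCost (c : A → ℝ≥0∞) (S : Finset A) : ℝ≥0∞ :=
  ∑ a ∈ S, c a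

/-- The minimum cost `c*(I)` over all desired structures. -/
noncomputable def cstar (SS : Finset (Finset A)) (c : A → ℝ≥0∞) : ℝ≥0∞ :=
  ⨅ S ∈ SS, structCost c S

/-- The VCG threshold `v(I,a) = c*(I_a^∞) - c*(I_a^0)`. -/
noncomputable def vth (SS : Finset (Finset A)) (c : A → ℝ≥0∞) (a : A) : ℝ≥0∞ :=
  cstar SS (Function.update c a ⊤) - cstar SS (Function.update c a 0)

/-- The incentive payment `p(a) = c*(I_a^∞) - c*(I)`. -/
noncomputable def pay (SS : Finset (Finset A)) (c : A → ℝ≥0∞) (a : A) : ℝ≥0∞ :=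
  cstar SS (Function.update c a ⊤) - cstar SS c

/-- `S` is a minimum structure. -/
def IsMinStruct (SS : Finset (Finset A)) (c : A → ℝ≥0∞) (S : Finset A) : Prop :=
  S ∈ SS ∧ ∀ T ∈ SS, structCost c S ≤ structCost c T

/-- The total VCG cost `C_VCG = C* + Σ_a p(a)`. -/
noncomputable def cvcg (SS : Finset (Finset A)) (c : A → ℝ≥0∞) : ℝ≥0∞ :=
  cstar SS c + ∑ a, pay SS c a

set_option linter.unusedSectionVars false
set_option linter.unusedVariables false

section Lemmas
variable (SS : Finset (Finset A)) (c : A → ℝ≥0∞)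

lemma measurable_structCost (S : Finset A) :
    Measurable (fun c : A → ℝ≥0∞ => structCost c S) := by
  unfold structCost
  exact Finset.measurable_sum _ fun a _ => measurable_pi_apply a

lemma measurable_cstar : Measurable (cstar SS) := by
  unfold cstar
  exact Measurable.iInf fun S => Measurable.iInf fun _ => measurable_structCost S

lemma measurable_vth (a : A) : Measurable (fun c => vth SS c a) := by
  unfold vth
  exact ((measurable_cstar SS).comp (measurable_update_left)).sub
    (((measurable_cstar SS).comp (measurable_update_left)))

lemma measurable_pay (a : A) : Measurable (fun c => pay SS c a) := by
  unfold pay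
  exact ((measurable_cstar SS).comp (measurable_update_left)).sub (measurable_cstar SS)

lemma measurable_cvcg : Measurable (cvcg SS) := by
  unfold cvcg
  exact (measurable_cstar SS).add (Finset.measurable_sum _ fun a _ => measurable_pay SS a)

lemma cstar_le {S : Finset A} (hS : S ∈ SS) : cstar SS c ≤ structCost c S :=
  iInf₂_le S hS

lemma exists_min (hSS : SS.Nonempty) :
    ∃ S₀ ∈ SS, cstar SS c = structCost c S₀ ∧
      ∀ T ∈ SS, structCost c S₀ ≤ structCost c T := by
  obtain ⟨S₀, hS₀, hmin⟩ := SS.exists_min_image (structCost c) hSS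
  exact ⟨S₀, hS₀, le_antisymm (cstar_le SS c hS₀) (le_iInf₂ hmin), hmin⟩

lemma cstar_le_update_zero_add (hSS : SS.Nonempty) (a : A) :
    cstar SS c ≤ cstar SS (Function.update c a 0) + c a := by
  obtain ⟨S₀, hS₀, hval, -⟩ := exists_min SS (Function.update c a 0) hSS
  rw [hval]
  refine le_trans (cstar_le SS c hS₀) ?_
  unfold structCost
  by_cases ha : a ∈ S₀
  · rw [Finset.sum_update_of_mem ha, zero_add]
    rw [← Finset.add_sum_erase _ c ha, Finset.sdiff_singleton_eq_erase, add_comm]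
  · rw [Finset.sum_update_of_notMem ha]
    exact le_add_right le_rfl

/-- Lemma A: the payment dominates the threshold minus the cost. -/
lemma vth_sub_le_pay (hSS : SS.Nonempty) (a : A) :
    vth SS c a - c a ≤ pay SS c a := by
  unfold vth pay
  rw [tsub_tsub]
  exact tsub_le_tsub_left (cstar_le_update_zero_add SS c hSS a) _

/-- Lemma B: for generic finite costs, the nominal cost is at most the sum of the
costs of the items below threshold. -/
lemma cstar_le_sum_ite (hSS : SS.Nonempty) (hfin : ∀ a, c a ≠ ⊤)
    (hdist : ∀ S ∈ SS, ∀ T ∈ SS, S ≠ T → structCost c S ≠ structCost c T) :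
    cstar SS c ≤ ∑ a, if c a < vth SS c a then c a else 0 := by
  obtain ⟨S₀, hS₀, hval, hmin⟩ := exists_min SS c hSS
  have hwin : ∀ a ∈ S₀, c a < vth SS c a := by
    intro a ha
    have hmfin : structCost c S₀ ≠ ⊤ := by
      unfold structCost
      exact ENNReal.sum_ne_top.2 fun b _ => hfin b
    -- (1) cstar (update c a 0) + c a ≤ structCost c S₀
    have h1 : cstar SS (Function.update c a 0) + c a ≤ structCost c S₀ := by
      refine le_trans (add_le_add (cstar_le SS _ hS₀) le_rfl) ?_
      unfold structCost
      rw [Finset.sum_update_of_mem ha, zero_add, Finset.sdiff_singleton_eq_erase,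
        add_comm, Finset.add_sum_erase _ c ha]
    -- (2) structCost c S₀ < cstar (update c a ⊤)
    have h2 : structCost c S₀ < cstar SS (Function.update c a ⊤) := by
      obtain ⟨T₀, hT₀, hTval, -⟩ := exists_min SS (Function.update c a ⊤) hSS
      rw [hTval]
      by_cases haT : a ∈ T₀
      · have : structCost (Function.update c a ⊤) T₀ = ⊤ := by
          unfold structCost
          rw [Finset.sum_update_of_mem haT]
          simp
        rw [this]
        exact hmfin.lt_top
      · have hTc : structCost (Function.update c a ⊤) T₀ = structCost c T₀ := by
          unfold structCost
          exact Finset.sum_congr rfl fun b hb =>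
            Function.update_of_ne (by rintro rfl; exact haT hb) _ _
        rw [hTc]
        have hne : S₀ ≠ T₀ := fun h => haT (h ▸ ha)
        exact lt_of_le_of_ne (hmin T₀ hT₀) (hdist S₀ hS₀ T₀ hT₀ hne)
    -- combine
    have hY : cstar SS (Function.update c a 0) ≠ ⊤ :=
      fun h => hmfin (top_le_iff.1 (h ▸ (le_trans le_self_add h1)))
    unfold vth
    rw [(ENNReal.cancel_of_ne hY).lt_tsub_iff_right]
    calc c a + cstar SS (Function.update c a 0)
        = cstar SS (Function.update c a 0) + c a := add_comm _ _
      _ ≤ structCost c S₀ := h1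
      _ < cstar SS (Function.update c a ⊤) := h2
  calc cstar SS c = ∑ a ∈ S₀, c a := hval
    _ = ∑ a ∈ S₀, (if c a < vth SS c a then c a else 0) :=
        Finset.sum_congr rfl fun a ha => by rw [if_pos (hwin a ha)]
    _ ≤ ∑ a, (if c a < vth SS c a then c a else 0) :=
        Finset.sum_le_sum_of_subset (Finset.subset_univ S₀)


end Lemmas


noncomputable def unif (d : ℝ) : Measure ℝ :=
  (ENNReal.ofReal d)⁻¹ • volume.restrict (Set.Ioo 0 d)

lemma unif_prob {d : ℝ} (hd : 0 < d) : IsProbabilityMeasure (unif d) := by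
  constructor
  rw [unif, Measure.smul_apply, Measure.restrict_apply MeasurableSet.univ,
    Set.univ_inter, Real.volume_Ioo, sub_zero, smul_eq_mul]
  exact ENNReal.inv_mul_cancel (by simp [ENNReal.ofReal_eq_zero]; linarith) ofReal_ne_top

lemma unif_null {d : ℝ} (hd : 0 < d) (r : ℝ) : unif d ({r} ∪ Set.Iic 0) = 0 := by
  rw [unif, Measure.smul_apply,
    Measure.restrict_apply ((measurableSet_singleton r).union measurableSet_Iic)]
  have h : ({r} ∪ Set.Iic 0) ∩ Set.Ioo 0 d ⊆ {r} := by
    rintro s ⟨hs1 | hs2, hs3⟩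
    · exact hs1
    · exact absurd hs3.1 (not_lt.2 hs2)
  rw [measure_mono_null h (measure_singleton r)]
  simp


lemma lintegral_reflect (m : ℝ) (f : ℝ → ℝ≥0∞) :
    ∫⁻ s in Set.Ioo 0 m, f (m - s) = ∫⁻ s in Set.Ioo 0 m, f s := by
  have hmp : MeasurePreserving (fun s : ℝ => m - s) volume volume :=
    Measure.measurePreserving_sub_left volume m
  have := hmp.setLIntegral_comp_emb (MeasurableEquiv.subLeft m).measurableEmbedding
    f (Set.Ioo 0 m)
  rw [show (fun s : ℝ => m - s) '' Set.Ioo 0 m = Set.Ioo 0 m by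
    rw [Set.image_const_sub_Ioo]; simp] at this
  simpa using this

lemma one_dim_key (t : ℝ≥0∞) {d : ℝ} (hd : 0 < d) :
    ∫⁻ s in Set.Ioo 0 d, (if ENNReal.ofReal s < t then ENNReal.ofReal s else 0)
      ≤ ∫⁻ s in Set.Ioo 0 d, (t - ENNReal.ofReal s) := by
  rcases eq_top_or_lt_top t with ht | ht
  · subst ht
    have hrhs : ∫⁻ s in Set.Ioo 0 d, ((⊤:ℝ≥0∞) - ENNReal.ofReal s) = ⊤ := by
      have h1 : ∀ s : ℝ, (⊤:ℝ≥0∞) - ENNReal.ofReal s = ⊤ := fun s => by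
        simp [ENNReal.sub_eq_top_iff]
      simp only [h1]
      rw [setLIntegral_const, Real.volume_Ioo]
      rw [ENNReal.top_mul (by simp [ENNReal.ofReal_eq_zero]; linarith)]
    rw [hrhs]
    exact le_top
  -- t finite
  set τ := t.toReal with hτ
  have htτ : t = ENNReal.ofReal τ := (ENNReal.ofReal_toReal ht.ne).symm
  set m := min τ d with hm
  have hm0 : 0 ≤ m := le_min ENNReal.toReal_nonneg hd.le
  have hmd : Set.Ioo 0 m ⊆ Set.Ioo 0 d := Set.Ioo_subset_Ioo le_rfl (min_le_right _ _)
  -- LHS equals integral over Ioo 0 m of ofReal s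
  have hLHS : ∫⁻ s in Set.Ioo 0 d, (if ENNReal.ofReal s < t then ENNReal.ofReal s else 0)
      = ∫⁻ s in Set.Ioo 0 m, ENNReal.ofReal s := by
    rw [← lintegral_indicator measurableSet_Ioo, ← lintegral_indicator measurableSet_Ioo]
    congr 1
    funext s
    by_cases hs : s ∈ Set.Ioo 0 d
    · rw [Set.indicator_of_mem hs]
      by_cases hst : ENNReal.ofReal s < t
      · rw [if_pos hst]
        have hsm : s ∈ Set.Ioo 0 m := by
          refine ⟨hs.1, lt_min ?_ hs.2⟩
          rw [htτ] at hst
          exact (ENNReal.ofReal_lt_ofReal_iff_of_nonneg hs.1.le).1 hst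
        rw [Set.indicator_of_mem hsm]
      · rw [if_neg hst]
        have hsm : s ∉ Set.Ioo 0 m := by
          intro hsm
          exact hst (htτ ▸ (ENNReal.ofReal_lt_ofReal_iff_of_nonneg hs.1.le).2
            (lt_of_lt_of_le hsm.2 (min_le_left _ _)))
        rw [Set.indicator_of_notMem hsm]
    · rw [Set.indicator_of_notMem hs, Set.indicator_of_notMem (fun h => hs (hmd h))]
  rw [hLHS]
  calc ∫⁻ s in Set.Ioo 0 m, ENNReal.ofReal s
      = ∫⁻ s in Set.Ioo 0 m, ENNReal.ofReal (m - s) := (lintegral_reflect m _).symm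
    _ ≤ ∫⁻ s in Set.Ioo 0 m, (t - ENNReal.ofReal s) := by
        refine setLIntegral_mono (by fun_prop) fun s hs => ?_
        refine ENNReal.le_sub_of_add_le_right ENNReal.ofReal_ne_top ?_
        rw [← ENNReal.ofReal_add (by linarith [hs.2]) hs.1.le]
        have hms : m - s + s = m := by ring
        rw [hms, htτ]
        exact ENNReal.ofReal_le_ofReal (min_le_left _ _)
    _ ≤ ∫⁻ s in Set.Ioo 0 d, (t - ENNReal.ofReal s) :=
        lintegral_mono_set hmd


lemma unif_key {d : ℝ} (hd : 0 < d) (t : ℝ≥0∞) :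
    ∫⁻ s, (if ENNReal.ofReal s < t then ENNReal.ofReal s else 0) ∂unif d
      ≤ ∫⁻ s, (t - ENNReal.ofReal s) ∂unif d := by
  rw [unif, lintegral_smul_measure, lintegral_smul_measure]
  exact mul_le_mul_right (one_dim_key t hd) _

noncomputable def Ecost (x : A → ℝ) : A → ℝ≥0∞ := fun a => ENNReal.ofReal (x a)

lemma measurable_Ecost : Measurable (Ecost (A := A)) :=
  measurable_pi_lambda _ fun a => ENNReal.measurable_ofReal.comp (measurable_pi_apply a)

lemma Ecost_update (x : A → ℝ) (a : A) (s : ℝ) :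
    Ecost (Function.update x a s) = Function.update (Ecost x) a (ENNReal.ofReal s) := by
  funext b
  by_cases hb : b = a
  · subst hb; simp [Ecost]
  · simp [Ecost, Function.update_of_ne hb]

lemma map_eq_pi {Ω : Type*} [MeasurableSpace Ω] (μ : Measure Ω) [IsProbabilityMeasure μ]
    (X : A → Ω → ℝ) (hX : ∀ a, Measurable (X a))
    (hindep : iIndepFun X μ) :
    μ.map (fun ω a => X a ω) = Measure.pi (fun a => μ.map (X a)) := by
  haveI : ∀ a, SigmaFinite (μ.map (X a)) := fun a => by
    haveI : IsProbabilityMeasure (μ.map (X a)) := Measure.isProbabilityMeasure_map (hX a).aemeasurable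
    infer_instance
  refine (Measure.pi_eq fun s hs => ?_).symm
  rw [Measure.map_apply (measurable_pi_lambda _ fun a => hX a) (MeasurableSet.univ_pi hs)]
  have hpre : (fun ω a => X a ω) ⁻¹' (Set.pi Set.univ s)
      = ⋂ a ∈ (Finset.univ : Finset A), X a ⁻¹' s a := by
    ext ω; simp [Set.mem_pi]
  rw [hpre, hindep.measure_inter_preimage_eq_mul Finset.univ (fun i _ => hs i)]
  exact Finset.prod_congr rfl fun a _ => (Measure.map_apply (hX a) (hs a)).symm

section Main
variable {d : A → ℝ}

lemma vth_update_self (SS : Finset (Finset A)) (c : A → ℝ≥0∞) (a : A) (v : ℝ≥0∞) :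
    vth SS (Function.update c a v) a = vth SS c a := by
  unfold vth
  rw [Function.update_idem, Function.update_idem]

lemma pair_null (hd : ∀ a, 0 < d a) (S T : Finset A) (a : A) (haS : a ∈ S) (haT : a ∉ T) :
    Measure.pi (fun a => unif (d a))
      {x : A → ℝ | structCost (Ecost x) S = structCost (Ecost x) T} = 0 := by
  haveI : ∀ a, SigmaFinite (unif (d a)) := fun a => by
    haveI := unif_prob (hd a); infer_instance
  set N : Set (A → ℝ) := {x | structCost (Ecost x) S = structCost (Ecost x) T} with hN
  have hNmeas : MeasurableSet N := by
    have hf := (measurable_structCost S).comp (measurable_Ecost (A := A))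
    have hg := (measurable_structCost T).comp (measurable_Ecost (A := A))
    have : N = {x | structCost (Ecost x) S ≤ structCost (Ecost x) T}
        ∩ {x | structCost (Ecost x) T ≤ structCost (Ecost x) S} := by
      ext x; exact le_antisymm_iff
    rw [this]
    exact (measurableSet_le hf hg).inter (measurableSet_le hg hf)
  rw [← lintegral_indicator_one hNmeas]
  have h0 : ∫⁻ x, (0:ℝ≥0∞) ∂Measure.pi (fun a => unif (d a)) = 0 := lintegral_zero
  rw [← h0]
  refine lintegral_eq_of_lmarginal_eq {a} (measurable_one.indicator hNmeas)
    measurable_const ?_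
  funext x
  rw [lmarginal_singleton, lmarginal_singleton]
  simp only [Pi.zero_apply, lintegral_zero]
  refine le_antisymm ?_ zero_le
  set K₁ : ℝ≥0∞ := ∑ b ∈ S.erase a, Ecost x b with hK₁
  set K₂ : ℝ≥0∞ := structCost (Ecost x) T with hK₂
  set r : ℝ := (K₂ - K₁).toReal with hr
  have hbound : ∀ s : ℝ, N.indicator (1 : (A → ℝ) → ℝ≥0∞) (Function.update x a s)
      ≤ ({r} ∪ Set.Iic 0 : Set ℝ).indicator (1 : ℝ → ℝ≥0∞) s := by
    intro s
    by_cases hmem : Function.update x a s ∈ N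
    · rcases le_or_gt s 0 with hs | hs
      · rw [Set.indicator_of_mem (Set.mem_union_right _ (Set.mem_Iic.mpr hs))]
        exact Set.indicator_apply_le' (fun _ => le_rfl) (fun _ => zero_le)
      · -- s > 0, show s = r
        have heq : ENNReal.ofReal s + K₁ = K₂ := by
          have h1 : structCost (Ecost (Function.update x a s)) S
              = ENNReal.ofReal s + K₁ := by
            rw [Ecost_update]
            unfold structCost
            rw [Finset.sum_update_of_mem haS, hK₁, Finset.sdiff_singleton_eq_erase]
          have h2 : structCost (Ecost (Function.update x a s)) T = K₂ := by
            rw [Ecost_update]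
            unfold structCost
            exact Finset.sum_congr rfl fun b hb =>
              Function.update_of_ne (by rintro rfl; exact haT hb) _ _
          rw [← h1, ← h2]; exact hmem
        have hK₁fin : K₁ ≠ ⊤ := by
          rw [hK₁]
          exact ENNReal.sum_ne_top.2 fun b _ => ENNReal.ofReal_ne_top
        have hsr : s = r := by
          have : K₂ - K₁ = ENNReal.ofReal s := by
            rw [← heq, ENNReal.add_sub_cancel_right hK₁fin]
          rw [hr, this, ENNReal.toReal_ofReal hs.le]
        rw [Set.indicator_of_mem (Set.mem_union_left _ (by simp [hsr]))]
        exact Set.indicator_apply_le' (fun _ => le_rfl) (fun _ => zero_le)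
    · rw [Set.indicator_of_notMem hmem]
      exact zero_le
  calc ∫⁻ s, N.indicator (1 : (A → ℝ) → ℝ≥0∞) (Function.update x a s) ∂unif (d a)
      ≤ ∫⁻ s, ({r} ∪ Set.Iic 0 : Set ℝ).indicator (1 : ℝ → ℝ≥0∞) s ∂unif (d a) :=
        lintegral_mono hbound
    _ = unif (d a) ({r} ∪ Set.Iic 0) :=
        lintegral_indicator_one ((measurableSet_singleton r).union measurableSet_Iic)
    _ = 0 := unif_null (hd a) r

end Main

section Main2
variable {d : A → ℝ}

lemma bad_null (hd : ∀ a, 0 < d a) (SS : Finset (Finset A)) :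
    Measure.pi (fun a => unif (d a))
      {x : A → ℝ | ∃ S ∈ SS, ∃ T ∈ SS, S ≠ T
        ∧ structCost (Ecost x) S = structCost (Ecost x) T} = 0 := by
  have hsub : {x : A → ℝ | ∃ S ∈ SS, ∃ T ∈ SS, S ≠ T
        ∧ structCost (Ecost x) S = structCost (Ecost x) T}
      ⊆ ⋃ p : Finset A × Finset A,
        {x : A → ℝ | p.1 ≠ p.2 ∧ structCost (Ecost x) p.1 = structCost (Ecost x) p.2} := by
    rintro x ⟨S, -, T, -, hne, heq⟩
    exact Set.mem_iUnion.2 ⟨(S, T), hne, heq⟩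
  refine measure_mono_null hsub (measure_iUnion_null fun p => ?_)
  rcases eq_or_ne p.1 p.2 with h | h
  · have : {x : A → ℝ | p.1 ≠ p.2 ∧ structCost (Ecost x) p.1 = structCost (Ecost x) p.2}
        = ∅ := by
      ext x; simp [h]
    rw [this]; exact measure_empty
  · refine measure_mono_null
      ((fun x hx => hx.2) : _ ⊆ {x : A → ℝ |
        structCost (Ecost x) p.1 = structCost (Ecost x) p.2}) ?_
    by_cases hST : p.1 ⊆ p.2
    · have hTS : ¬ p.2 ⊆ p.1 := fun h' => h (Finset.Subset.antisymm hST h')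
      obtain ⟨a, haT, haS⟩ := Finset.not_subset.1 hTS
      have hswap : {x : A → ℝ | structCost (Ecost x) p.1 = structCost (Ecost x) p.2}
          = {x : A → ℝ | structCost (Ecost x) p.2 = structCost (Ecost x) p.1} := by
        ext x; exact eq_comm
      rw [hswap]
      exact pair_null hd p.2 p.1 a haT haS
    · obtain ⟨a, haS, haT⟩ := Finset.not_subset.1 hST
      exact pair_null hd p.1 p.2 a haS haT

end Main2

section Main3
variable {d : A → ℝ}

lemma coord_le (hd : ∀ a, 0 < d a) (SS : Finset (Finset A)) (hSS : SS.Nonempty) (a : A) :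
    ∫⁻ x, (if Ecost x a < vth SS (Ecost x) a then Ecost x a else 0)
        ∂Measure.pi (fun a => unif (d a))
      ≤ ∫⁻ x, pay SS (Ecost x) a ∂Measure.pi (fun a => unif (d a)) := by
  haveI : ∀ b, SigmaFinite (unif (d b)) := fun b => by
    haveI := unif_prob (hd b); infer_instance
  have hg₁ : Measurable (fun x : A → ℝ =>
      if Ecost x a < vth SS (Ecost x) a then Ecost x a else 0) := by
    have hc : Measurable fun x : A → ℝ => Ecost x a :=
      (measurable_pi_apply a).comp measurable_Ecost
    have hv : Measurable fun x : A → ℝ => vth SS (Ecost x) a :=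
      (measurable_vth SS a).comp measurable_Ecost
    exact Measurable.ite (measurableSet_lt hc hv) hc measurable_const
  have hg₂ : Measurable (fun x : A → ℝ => pay SS (Ecost x) a) :=
    (measurable_pay SS a).comp measurable_Ecost
  refine lintegral_le_of_lmarginal_le {a} hg₁ hg₂ ?_
  intro x
  rw [lmarginal_singleton, lmarginal_singleton]
  set t := vth SS (Ecost x) a with ht
  calc ∫⁻ s, (if Ecost (Function.update x a s) a < vth SS (Ecost (Function.update x a s)) a
          then Ecost (Function.update x a s) a else 0) ∂unif (d a)
      = ∫⁻ s, (if ENNReal.ofReal s < t then ENNReal.ofReal s else 0) ∂unif (d a) := by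
        refine lintegral_congr fun s => ?_
        rw [Ecost_update, Function.update_self, vth_update_self]
    _ ≤ ∫⁻ s, (t - ENNReal.ofReal s) ∂unif (d a) := unif_key (hd a) t
    _ ≤ ∫⁻ s, pay SS (Ecost (Function.update x a s)) a ∂unif (d a) := by
        refine lintegral_mono fun s => ?_
        have := vth_sub_le_pay SS (Ecost (Function.update x a s)) hSS a
        rw [Ecost_update, vth_update_self, Function.update_self] at this
        rw [Ecost_update]
        exact this

lemma main_pi (hd : ∀ a, 0 < d a) (SS : Finset (Finset A)) (hSS : SS.Nonempty) :
    2 * ∫⁻ x, cstar SS (Ecost x) ∂Measure.pi (fun a => unif (d a))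
      ≤ ∫⁻ x, cvcg SS (Ecost x) ∂Measure.pi (fun a => unif (d a)) := by
  haveI : ∀ b, SigmaFinite (unif (d b)) := fun b => by
    haveI := unif_prob (hd b); infer_instance
  set π := Measure.pi (fun a => unif (d a)) with hπ
  have hkey : ∫⁻ x, cstar SS (Ecost x) ∂π ≤ ∫⁻ x, ∑ a, pay SS (Ecost x) a ∂π := by
    have h1 : ∫⁻ x, cstar SS (Ecost x) ∂π
        ≤ ∫⁻ x, ∑ a, (if Ecost x a < vth SS (Ecost x) a then Ecost x a else 0) ∂π := by
      refine lintegral_mono_ae ?_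
      have hae : ∀ᵐ x ∂π, ∀ S ∈ SS, ∀ T ∈ SS, S ≠ T →
          structCost (Ecost x) S ≠ structCost (Ecost x) T := by
        rw [MeasureTheory.ae_iff]
        refine measure_mono_null ?_ (bad_null hd SS)
        intro x hx
        simp only [Set.mem_setOf_eq] at hx ⊢
        push_neg at hx
        obtain ⟨S, hS, T, hT, hne, heq⟩ := hx
        exact ⟨S, hS, T, hT, hne, heq⟩
      filter_upwards [hae] with x hx
      exact cstar_le_sum_ite SS (Ecost x) hSS (fun a => ENNReal.ofReal_ne_top) hx
    have h2 : ∫⁻ x, ∑ a, (if Ecost x a < vth SS (Ecost x) a then Ecost x a else 0) ∂π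
        ≤ ∫⁻ x, ∑ a, pay SS (Ecost x) a ∂π := by
      have hmg : ∀ a : A, Measurable (fun x : A → ℝ =>
          if Ecost x a < vth SS (Ecost x) a then Ecost x a else 0) := fun a => by
        have hc : Measurable fun x : A → ℝ => Ecost x a :=
          (measurable_pi_apply a).comp measurable_Ecost
        have hv : Measurable fun x : A → ℝ => vth SS (Ecost x) a :=
          (measurable_vth SS a).comp measurable_Ecost
        exact Measurable.ite (measurableSet_lt hc hv) hc measurable_const
      rw [lintegral_finset_sum _ fun a _ => hmg a,
        lintegral_finset_sum _ fun a _ =>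
          (show Measurable fun x : A → ℝ => pay SS (Ecost x) a from
            (measurable_pay SS a).comp measurable_Ecost)]
      exact Finset.sum_le_sum fun a _ => coord_le hd SS hSS a
    exact h1.trans h2
  have hsplit : ∫⁻ x, cvcg SS (Ecost x) ∂π
      = ∫⁻ x, cstar SS (Ecost x) ∂π + ∫⁻ x, ∑ a, pay SS (Ecost x) a ∂π := by
    simp only [cvcg]
    rw [← lintegral_add_left
      (show Measurable fun x : A → ℝ => cstar SS (Ecost x) from
        (measurable_cstar SS).comp measurable_Ecost)]
  rw [hsplit, two_mul]
  exact add_le_add le_rfl hkey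

end Main3

/-- If item costs are independent, with `c(a)` uniform on `(0, d_a)`,
then `E[C_VCG] ≥ 2 E[C*]`. -/
theorem expected_vcg_ge_two_expected_nominal
    {Ω : Type*} [MeasurableSpace Ω] (μ : Measure Ω) [IsProbabilityMeasure μ]
    (SS : Finset (Finset A)) (hSS : SS.Nonempty)
    (X : A → Ω → ℝ) (hX : ∀ a, Measurable (X a))
    (hindep : iIndepFun X μ)
    (d : A → ℝ) (hd : ∀ a, 0 < d a)
    (hdist : ∀ a, μ.map (X a)
      = (ENNReal.ofReal (d a))⁻¹ • volume.restrict (Set.Ioo 0 (d a))) :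
    2 * ∫⁻ ω, cstar SS (fun a => ENNReal.ofReal (X a ω)) ∂μ
      ≤ ∫⁻ ω, cvcg SS (fun a => ENNReal.ofReal (X a ω)) ∂μ := by
  have hmap := map_eq_pi μ X hX hindep
  have hunif : (fun a => μ.map (X a)) = fun a => unif (d a) := funext fun a => hdist a
  rw [hunif] at hmap
  have hG : Measurable (fun ω a => X a ω) := measurable_pi_lambda _ fun a => hX a
  have h1 : ∫⁻ ω, cstar SS (fun a => ENNReal.ofReal (X a ω)) ∂μ
      = ∫⁻ x, cstar SS (Ecost x) ∂Measure.pi (fun a => unif (d a)) := by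
    rw [← hmap, lintegral_map (show Measurable fun x : A → ℝ => cstar SS (Ecost x) from
      (measurable_cstar SS).comp measurable_Ecost) hG]
    rfl
  have h2 : ∫⁻ ω, cvcg SS (fun a => ENNReal.ofReal (X a ω)) ∂μ
      = ∫⁻ x, cvcg SS (Ecost x) ∂Measure.pi (fun a => unif (d a)) := by
    rw [← hmap, lintegral_map (show Measurable fun x : A → ℝ => cvcg SS (Ecost x) from
      (measurable_cvcg SS).comp measurable_Ecost) hG]
    rfl
  rw [h1, h2]
  exact main_pi hd SS hSS
end

section
/- For a matroid M on ground set A with arbitrary nonnegative costs c(a), the minimum cost of a basis satisfies C*(M) = ∫_0^∞ (rk(A) − rk(A(t))) dt, where A(t) = {a ∈ A : c(a) ≤ t}. -/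
open MeasureTheory ProbabilityTheory ENNReal
open scoped BigOperators

variable {A : Type*} [Fintype A] [DecidableEq A]

/-- A matroid on finite ground set `A`, given by its rank function. -/
structure RankMatroid (A : Type*) [Fintype A] [DecidableEq A] where
  rk : Finset A → ℕ
  rk_le_card : ∀ S : Finset A, rk S ≤ S.card
  rk_mono : ∀ ⦃S T : Finset A⦄, S ⊆ T → rk S ≤ rk T
  rk_submodular : ∀ S T : Finset A, rk (S ∪ T) + rk (S ∩ T) ≤ rk S + rk T

namespace RankMatroid

variable {A : Type*} [Fintype A] [DecidableEq A]

/-- The collection of bases of the matroid. -/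
noncomputable def bases (M : RankMatroid A) : Finset (Finset A) :=
  Finset.univ.filter (fun S => M.rk S = S.card ∧ M.rk S = M.rk Finset.univ)

/-- A set is independent if its rank equals its cardinality. -/
def Indep (M : RankMatroid A) (S : Finset A) : Prop := M.rk S = S.card

/-- A matroid is bridgeless if no single element removal decreases the rank of the ground set. -/
def Bridgeless (M : RankMatroid A) : Prop :=
  ∀ a : A, M.rk (Finset.univ.erase a) = M.rk Finset.univ

/-- `β(S)`: the number of bridges in `S`. -/
def beta (M : RankMatroid A) (S : Finset A) : ℕ :=
  (S.filter (fun a => M.rk (S.erase a) < M.rk S)).card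

end RankMatroid

/-- `A(t)`: the set of items with cost at most `t`. -/
noncomputable def Aset {A : Type*} [Fintype A] [DecidableEq A] (c : A → ℝ) (t : ℝ) : Finset A :=
  Finset.univ.filter (fun a => c a ≤ t)

namespace RankMatroid

variable {A : Type*} [Fintype A] [DecidableEq A] (M : RankMatroid A)

lemma rk_empty' : M.rk ∅ = 0 :=
  Nat.le_zero.mp (by simpa using M.rk_le_card ∅)

lemma rk_insert_le' (S : Finset A) (a : A) : M.rk (insert a S) ≤ M.rk S + 1 := by
  have h := M.rk_submodular S {a}
  have h1 : M.rk {a} ≤ 1 := by simpa using M.rk_le_card {a}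
  have hu : S ∪ {a} = insert a S := by
    rw [Finset.union_comm, ← Finset.insert_eq]
  rw [hu] at h
  omega

lemma indep_subset' {S T : Finset A} (hS : M.rk S = S.card) (hTS : T ⊆ S) :
    M.rk T = T.card := by
  have hsub := M.rk_submodular T (S \ T)
  have hu : T ∪ (S \ T) = S := Finset.union_sdiff_of_subset hTS
  have hi : T ∩ (S \ T) = ∅ := by
    ext x; simp (config := { contextual := true }) [Finset.mem_inter, Finset.mem_sdiff]
  rw [hu, hi, M.rk_empty'] at hsub
  have h1 := M.rk_le_card T
  have h2 := M.rk_le_card (S \ T)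
  have h3 : (S \ T).card = S.card - T.card := Finset.card_sdiff_of_subset hTS
  have h4 := Finset.card_le_card hTS
  omega

lemma span_insert' {S X : Finset A} {a : A} (hX : M.rk (S ∪ X) = M.rk S)
    (ha : M.rk (insert a S) = M.rk S) : M.rk (insert a (S ∪ X)) = M.rk S := by
  have hsub := M.rk_submodular (S ∪ X) (insert a S)
  have hu : (S ∪ X) ∪ insert a S = insert a (S ∪ X) := by
    ext x
    simp [Finset.mem_union, Finset.mem_insert]
    tauto
  have hmono : M.rk S ≤ M.rk ((S ∪ X) ∩ insert a S) :=
    M.rk_mono (Finset.subset_inter Finset.subset_union_left (Finset.subset_insert _ _))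
  have hge : M.rk (S ∪ X) ≤ M.rk (insert a (S ∪ X)) := M.rk_mono (Finset.subset_insert _ _)
  rw [hu] at hsub
  omega

lemma rk_span' {S U : Finset A} (hSU : S ⊆ U)
    (h : ∀ a ∈ U, M.rk (insert a S) = M.rk S) : M.rk U = M.rk S := by
  have key : ∀ X : Finset A, X ⊆ U → M.rk (S ∪ X) = M.rk S := by
    intro X
    induction X using Finset.induction_on with
    | empty => intro _; simp
    | @insert a X hnot ih =>
      intro hXU
      have hX : X ⊆ U := (Finset.subset_insert a X).trans hXU
      have haU : a ∈ U := hXU (Finset.mem_insert_self a X)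
      rw [Finset.union_insert]
      exact M.span_insert' (ih hX) (h a haU)
  have := key U Finset.Subset.rfl
  rwa [Finset.union_eq_right.mpr hSU] at this

lemma exists_basis_between' :
    ∀ (n : ℕ) (S U : Finset A), S ⊆ U → M.rk S = S.card → U.card ≤ S.card + n →
      ∃ B, S ⊆ B ∧ B ⊆ U ∧ M.rk B = B.card ∧ M.rk B = M.rk U := by
  intro n
  induction n with
  | zero =>
    intro S U hSU hS hcard
    have : S = U := Finset.eq_of_subset_of_card_le hSU (by omega)
    subst this
    exact ⟨S, Finset.Subset.rfl, Finset.Subset.rfl, hS, rfl⟩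
  | succ n ih =>
    intro S U hSU hS hcard
    by_cases hall : ∀ a ∈ U, M.rk (insert a S) = M.rk S
    · exact ⟨S, Finset.Subset.rfl, hSU, hS, (M.rk_span' hSU hall).symm⟩
    · push_neg at hall
      obtain ⟨a, haU, hne⟩ := hall
      have hle := M.rk_insert_le' S a
      have hge := M.rk_mono (Finset.subset_insert a S)
      have ha1 : M.rk (insert a S) = M.rk S + 1 := by omega
      have haS : a ∉ S := fun h => hne (by rw [Finset.insert_eq_self.mpr h])
      have hcard' : (insert a S).card = S.card + 1 := Finset.card_insert_of_notMem haS
      have hsub : insert a S ⊆ U := Finset.insert_subset haU hSU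
      obtain ⟨B, h1, h2, h3, h4⟩ := ih (insert a S) U hsub (by omega) (by omega)
      exact ⟨B, (Finset.subset_insert a S).trans h1, h2, h3, h4⟩

lemma exists_chain' (c : A → ℝ) :
    ∀ (n : ℕ) (V : Finset ℝ), V.card ≤ n →
      ∃ S : Finset A, M.rk S = S.card ∧ (∀ a ∈ S, ∃ v ∈ V, c a ≤ v) ∧
        ∀ v ∈ V, (S.filter (fun a => c a ≤ v)).card = M.rk (Aset c v) := by
  intro n
  induction n with
  | zero =>
    intro V hV
    have : V = ∅ := Finset.card_eq_zero.mp (Nat.le_zero.mp hV)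
    subst this
    exact ⟨∅, by simp [M.rk_empty'], by simp, by simp⟩
  | succ n ih =>
    intro V hV
    rcases V.eq_empty_or_nonempty with rfl | hne
    · exact ⟨∅, by simp [M.rk_empty'], by simp, by simp⟩
    set v := V.max' hne with hv
    set V' := V.erase v with hV'
    have hcard : V'.card ≤ n := by
      have h1 : V'.card = V.card - 1 := Finset.card_erase_of_mem (V.max'_mem hne)
      have hpos : 0 < V.card := Finset.card_pos.mpr hne
      omega
    obtain ⟨S', hS'i, hS'le, hS'rk⟩ := ih V' hcard
    have hS'v : S' ⊆ Aset c v := by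
      intro a ha
      obtain ⟨w, hwV', hw⟩ := hS'le a ha
      simp only [Aset, Finset.mem_filter, Finset.mem_univ, true_and]
      exact hw.trans (V.le_max' w (Finset.mem_of_mem_erase hwV'))
    obtain ⟨B, hSB, hBU, hBi, hBrk⟩ :=
      M.exists_basis_between' (Aset c v).card S' (Aset c v) hS'v hS'i (Nat.le_add_left _ _)
    refine ⟨B, hBi, ?_, ?_⟩
    · intro a haB
      refine ⟨v, V.max'_mem hne, ?_⟩
      have := hBU haB
      simpa [Aset] using this
    · intro w hwV
      by_cases hw : w = v
      · subst hw
        have hfB : B.filter (fun a => c a ≤ v) = B := by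
          apply Finset.filter_true_of_mem
          intro a haB
          have := hBU haB
          simpa [Aset] using this
        rw [hfB, ← hBi, hBrk]
      · have hwV' : w ∈ V' := Finset.mem_erase.mpr ⟨hw, hwV⟩
        have hV'ne : V'.Nonempty := ⟨w, hwV'⟩
        set u := V'.max' hV'ne with hu
        have hS'u : ∀ a ∈ S', c a ≤ u := by
          intro a ha
          obtain ⟨x, hx, hcx⟩ := hS'le a ha
          exact hcx.trans (V'.le_max' x hx)
        have hfs : S'.filter (fun a => c a ≤ u) = S' :=
          Finset.filter_true_of_mem hS'u
        have hrkAu : M.rk (Aset c u) = S'.card := by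
          rw [← hS'rk u (V'.max'_mem hV'ne), hfs]
        have hnew : ∀ a ∈ B, a ∉ S' → ¬ c a ≤ u := by
          intro a haB haS' hle
          have hS'sub : S' ⊆ Aset c u := by
            intro b hb
            simp only [Aset, Finset.mem_filter, Finset.mem_univ, true_and]
            exact hS'u b hb
          have hins : insert a S' ⊆ Aset c u :=
            Finset.insert_subset
              (by simp only [Aset, Finset.mem_filter, Finset.mem_univ, true_and]; exact hle)
              hS'sub
          have h1 : M.rk (insert a S') ≤ M.rk (Aset c u) := M.rk_mono hins
          have h2 : M.rk (insert a S') = (insert a S').card :=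
            M.indep_subset' hBi (Finset.insert_subset haB hSB)
          have h3 : (insert a S').card = S'.card + 1 := Finset.card_insert_of_notMem haS'
          omega
        have hwu : w ≤ u := V'.le_max' w hwV'
        have hfeq : B.filter (fun a => c a ≤ w) = S'.filter (fun a => c a ≤ w) := by
          ext a
          simp only [Finset.mem_filter]
          constructor
          · rintro ⟨haB, hle⟩
            refine ⟨?_, hle⟩
            by_contra haS'
            exact hnew a haB haS' (hle.trans hwu)
          · rintro ⟨haS', hle⟩
            exact ⟨hSB haS', hle⟩
        rw [hfeq]
        exact hS'rk w hwV'

lemma exists_good_basis' (c : A → ℝ) :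
    ∃ S ∈ M.bases, ∀ t : ℝ, (S.filter (fun a => c a ≤ t)).card = M.rk (Aset c t) := by
  obtain ⟨S, hSi, hSle, hSrk⟩ :=
    M.exists_chain' c (Finset.univ.image c).card (Finset.univ.image c) le_rfl
  have key : ∀ t : ℝ, (S.filter (fun a => c a ≤ t)).card = M.rk (Aset c t) := by
    intro t
    rcases (Aset c t).eq_empty_or_nonempty with he | hne
    · have h1 : S.filter (fun a => c a ≤ t) = ∅ := by
        rw [Finset.filter_eq_empty_iff]
        intro a _ hle
        have : a ∈ Aset c t := by
          simp only [Aset, Finset.mem_filter, Finset.mem_univ, true_and]; exact hle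
        rw [he] at this
        exact absurd this (Finset.notMem_empty a)
      rw [h1, he, M.rk_empty']
      simp
    · have hne' : ((Aset c t).image c).Nonempty := hne.image c
      set v := ((Aset c t).image c).max' hne' with hvdef
      have hv_mem : v ∈ (Aset c t).image c := Finset.max'_mem _ _
      have hv_max : ∀ w ∈ (Aset c t).image c, w ≤ v := fun w hw => Finset.le_max' _ w hw
      obtain ⟨a0, ha0, hva0⟩ := Finset.mem_image.mp hv_mem
      have hvV : v ∈ Finset.univ.image c := by
        rw [← hva0]; exact Finset.mem_image_of_mem c (Finset.mem_univ a0)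
      have hvt : v ≤ t := by
        rw [← hva0]
        simpa [Aset] using ha0
      have hAeq : Aset c v = Aset c t := by
        ext a
        simp only [Aset, Finset.mem_filter, Finset.mem_univ, true_and]
        constructor
        · intro h; exact h.trans hvt
        · intro h
          exact hv_max (c a) (Finset.mem_image_of_mem c
            (by simp only [Aset, Finset.mem_filter, Finset.mem_univ, true_and]; exact h))
      have hfeq : S.filter (fun a => c a ≤ v) = S.filter (fun a => c a ≤ t) := by
        ext a
        simp only [Finset.mem_filter]
        constructor
        · rintro ⟨ha, h⟩; exact ⟨ha, h.trans hvt⟩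
        · rintro ⟨ha, h⟩
          exact ⟨ha, hv_max (c a) (Finset.mem_image_of_mem c
            (by simp only [Aset, Finset.mem_filter, Finset.mem_univ, true_and]; exact h))⟩
      rw [← hfeq, hSrk v hvV, hAeq]
  have hrkuniv : M.rk S = M.rk Finset.univ := by
    rcases isEmpty_or_nonempty A with hA | hA
    · have : S = Finset.univ := Finset.eq_univ_of_forall (fun a => (hA.false a).elim)
      rw [this]
    · have hne' : (Finset.univ.image c).Nonempty :=
        (Finset.univ_nonempty).image c
      set t := (Finset.univ.image c).max' hne' with ht
      have hAu : Aset c t = Finset.univ := by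
        apply Finset.eq_univ_of_forall
        intro a
        simp only [Aset, Finset.mem_filter, Finset.mem_univ, true_and]
        exact Finset.le_max' _ (c a) (Finset.mem_image_of_mem c (Finset.mem_univ a))
      have hfS : S.filter (fun a => c a ≤ t) = S := by
        apply Finset.filter_true_of_mem
        intro a _
        exact Finset.le_max' _ (c a) (Finset.mem_image_of_mem c (Finset.mem_univ a))
      have := key t
      rw [hfS, hAu] at this
      rw [hSi, this]
  refine ⟨S, ?_, key⟩
  simp only [RankMatroid.bases, Finset.mem_filter, Finset.mem_univ, true_and]
  exact ⟨hSi, hrkuniv⟩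

end RankMatroid

lemma cost_formula {A : Type*} [Fintype A] [DecidableEq A] (c : A → ℝ) (hc : ∀ a, 0 ≤ c a)
    (S : Finset A) :
    structCost (fun a => ENNReal.ofReal (c a)) S
      = ∫⁻ t in Set.Ioi (0:ℝ),
          ((S.card - (S.filter (fun a => c a ≤ t)).card : ℕ) : ℝ≥0∞) := by
  have hpt : ∀ t : ℝ, ((S.card - (S.filter (fun a => c a ≤ t)).card : ℕ) : ℝ≥0∞)
      = ∑ a ∈ S, Set.indicator (Set.Iio (c a)) (fun _ => (1:ℝ≥0∞)) t := by
    intro t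
    have hcards : (S.filter (fun a => c a ≤ t)).card
        + (S.filter (fun a => ¬ c a ≤ t)).card = S.card :=
      Finset.card_filter_add_card_filter_not _
    have h1 : (S.card - (S.filter (fun a => c a ≤ t)).card : ℕ)
        = (S.filter (fun a => ¬ c a ≤ t)).card := by omega
    rw [h1, Finset.card_filter]
    push_cast
    apply Finset.sum_congr rfl
    intro a _
    by_cases h : c a ≤ t <;>
      simp [Set.indicator_apply, Set.mem_Iio, h, not_lt.mpr, lt_of_not_ge]
  calc structCost (fun a => ENNReal.ofReal (c a)) S
      = ∑ a ∈ S, ENNReal.ofReal (c a) := rfl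
    _ = ∑ a ∈ S, ∫⁻ t in Set.Ioi (0:ℝ),
          Set.indicator (Set.Iio (c a)) (fun _ => (1:ℝ≥0∞)) t := by
        refine Finset.sum_congr rfl fun a _ => ?_
        rw [lintegral_indicator measurableSet_Iio]
        rw [Measure.restrict_restrict measurableSet_Iio]
        rw [setLIntegral_one, Set.Iio_inter_Ioi, Real.volume_Ioo, sub_zero]
    _ = ∫⁻ t in Set.Ioi (0:ℝ),
          ∑ a ∈ S, Set.indicator (Set.Iio (c a)) (fun _ => (1:ℝ≥0∞)) t := by
        rw [lintegral_finset_sum]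
        intro a _
        exact measurable_const.indicator measurableSet_Iio
    _ = _ := lintegral_congr fun t => (hpt t).symm

/-- For a matroid with arbitrary nonnegative costs,
`C*(M) = ∫_0^∞ (rk(A) - rk(A(t))) dt`. -/
theorem matroid_nominal_cost_integral
    (M : RankMatroid A) (c : A → ℝ) (hc : ∀ a, 0 ≤ c a) :
    cstar M.bases (fun a => ENNReal.ofReal (c a))
      = ∫⁻ t in Set.Ioi (0:ℝ),
          ((M.rk Finset.univ - M.rk (Aset c t) : ℕ) : ℝ≥0∞) := by
  classical
  obtain ⟨S, hS, hkey⟩ := M.exists_good_basis' c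
  have hSb : M.rk S = S.card ∧ M.rk S = M.rk Finset.univ := by
    simpa [RankMatroid.bases] using hS
  have hScard : S.card = M.rk Finset.univ := hSb.2 ▸ hSb.1.symm
  apply le_antisymm
  · calc cstar M.bases (fun a => ENNReal.ofReal (c a))
        ≤ structCost (fun a => ENNReal.ofReal (c a)) S := by
          exact iInf₂_le S hS
      _ = ∫⁻ t in Set.Ioi (0:ℝ),
            ((S.card - (S.filter (fun a => c a ≤ t)).card : ℕ) : ℝ≥0∞) :=
          cost_formula c hc S
      _ = ∫⁻ t in Set.Ioi (0:ℝ),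
            ((M.rk Finset.univ - M.rk (Aset c t) : ℕ) : ℝ≥0∞) := by
          apply lintegral_congr
          intro t
          rw [hkey t, hScard]
  · refine le_iInf₂ fun T hT => ?_
    have hTb : M.rk T = T.card ∧ M.rk T = M.rk Finset.univ := by
      simpa [RankMatroid.bases] using hT
    rw [cost_formula c hc T]
    apply lintegral_mono
    intro t
    have hfi : M.rk (T.filter (fun a => c a ≤ t))
        = (T.filter (fun a => c a ≤ t)).card :=
      M.indep_subset' hTb.1 (Finset.filter_subset _ _)
    have hsub : T.filter (fun a => c a ≤ t) ⊆ Aset c t := by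
      intro a ha
      simp only [Aset, Finset.mem_filter, Finset.mem_univ, true_and]
      exact (Finset.mem_filter.mp ha).2
    have h1 : (T.filter (fun a => c a ≤ t)).card ≤ M.rk (Aset c t) :=
      hfi ▸ M.rk_mono hsub
    have h2 : M.rk Finset.univ = T.card := hTb.2 ▸ hTb.1
    exact Nat.cast_le.mpr (by omega)
end
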